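/- arXiv:2208.06329 — 2 statements merged into one kernel-verified Lean document; each statement's English description precedes it below -/
import Mathlib

section
/- Suppose the modular program signature is structurally valid. Then { I | (H, I) ∈ N_n } equals the set of all valid selections, i.e., the final node set produced by the model-graph algorithm is exactly the node set of the model graph. -/
/-- `pars I` is the image of `par` on the finset `I` of implementations. -/
def pars {ι κ : Type*} [DecidableEq κ] (par : ι → κ) (I : Finset ι) : Finset κ :=
  I.image par

/-- `holesOf I` is the union of the holes referenced by the implementations in `I`. -/
def holesOf {ι κ : Type*} [DecidableEq ι] [DecidableEq κ]
    (holes : ι → Finset κ) (I : Finset ι) : Finset κ :=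
  I.biUnion holes

/-- `implsH h` is the finset of implementations of the hole `h`. -/
def implsH {ι κ : Type*} [Fintype ι] [DecidableEq κ] (par : ι → κ) (h : κ) : Finset ι :=
  Finset.univ.filter (fun i => par i = h)

/-- `implsHs H` is the finset of implementations of holes in `H`. -/
def implsHs {ι κ : Type*} [Fintype ι] [DecidableEq κ] (par : ι → κ) (H : Finset κ) : Finset ι :=
  Finset.univ.filter (fun i => par i ∈ H)

/-- `siblings I₁ I₂` is the finset of pairs of distinct implementations across `I₁`, `I₂`
sharing a parent hole. -/
def siblings {ι κ : Type*} [DecidableEq ι] [DecidableEq κ]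
    (par : ι → κ) (I₁ I₂ : Finset ι) : Finset (ι × ι) :=
  (I₁ ×ˢ I₂).filter (fun p => p.1 ≠ p.2 ∧ par p.1 = par p.2)

/-- A finset `I` of implementations is a valid selection. -/
def ValidSelection {ι κ : Type*} [DecidableEq ι] [DecidableEq κ]
    (par : ι → κ) (holes : ι → Finset κ) (baseHoles : Finset κ) (I : Finset ι) : Prop :=
  pars par I = baseHoles ∪ holesOf holes I ∧ siblings par I I = ∅

/-- The module dependency graph: vertices are implementations plus one base node (`none`);
there is an edge `i₁ → i₂` whenever `par i₂ ∈ holes i₁`, and an edge `base → i₂`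
whenever `par i₂ ∈ baseHoles`. -/
def MDG {ι κ : Type*} (par : ι → κ) (holes : ι → Finset κ) (baseHoles : Finset κ) :
    Option ι → Option ι → Prop
  | some i₁, some i₂ => par i₂ ∈ holes i₁
  | none, some i₂ => par i₂ ∈ baseHoles
  | _, none => False

/-- Structural validity of a modular program signature: the module dependency graph has
no directed cycle, and every hole has at least one implementation. -/
def StructValid {ι κ : Type*} [Fintype ι] [DecidableEq κ]
    (par : ι → κ) (holes : ι → Finset κ) (baseHoles : Finset κ) : Prop :=
  Irreflexive (Relation.TransGen (MDG par holes baseHoles)) ∧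
  ∀ h : κ, (implsH par h).Nonempty

/-- The hole dependency graph `G_Dep`: an edge `h₁ → h₂` iff some implementation of `h₁`
references `h₂`. -/
def GDep {ι κ : Type*} (par : ι → κ) (holes : ι → Finset κ) (h₁ h₂ : κ) : Prop :=
  ∃ i : ι, par i = h₁ ∧ h₂ ∈ holes i

/-- `Hs 1, …, Hs n` is an enumeration of all holes in a topological order of the hole
dependency graph. -/
def TopoEnum {ι κ : Type*} (par : ι → κ) (holes : ι → Finset κ) (n : ℕ) (Hs : ℕ → κ) : Prop :=
  (∀ h : κ, ∃ j, 1 ≤ j ∧ j ≤ n ∧ Hs j = h) ∧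
  (∀ j k, 1 ≤ j → j ≤ n → 1 ≤ k → k ≤ n → Hs j = Hs k → j = k) ∧
  (∀ j k, 1 ≤ j → j ≤ n → 1 ≤ k → k ≤ n → GDep par holes (Hs j) (Hs k) → j < k)

/-- `Hpre Hs j` is the finset `{H₁, …, H_j}` of the first `j` holes of the enumeration. -/
def Hpre {κ : Type*} [DecidableEq κ] (Hs : ℕ → κ) (j : ℕ) : Finset κ :=
  (Finset.Icc 1 j).image Hs

/-- `expand-node(H, I, h)`. -/
def expandNode {ι κ : Type*} [DecidableEq ι] [DecidableEq κ]
    (par : ι → κ) (holes : ι → Finset κ) (H : Finset κ) (I : Finset ι) (h : κ) :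
    Set (Finset κ × Finset ι) :=
  if h ∈ H then
    {p | ∃ i : ι, par i = h ∧ p = (H ∪ holes i, insert i I)}
  else {(H, I)}

/-- `new-edges(H, I, h)`. -/
def newEdges {ι κ : Type*} [DecidableEq ι] [DecidableEq κ]
    (par : ι → κ) (holes : ι → Finset κ) (H : Finset κ) (I : Finset ι) (h : κ) :
    Set (Finset κ × Finset ι × Finset κ × Finset ι) :=
  if h ∈ H then
    {q | ∃ i₁ i₂ : ι, par i₁ = h ∧ par i₂ = h ∧ i₁ ≠ i₂ ∧
      q = (H ∪ holes i₁, insert i₁ I, H ∪ holes i₂, insert i₂ I)}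
  else ∅

/-- `expand-edge(H₁, I₁, H₂, I₂, h)`. -/
def expandEdge {ι κ : Type*} [DecidableEq ι] [DecidableEq κ]
    (par : ι → κ) (holes : ι → Finset κ)
    (H₁ : Finset κ) (I₁ : Finset ι) (H₂ : Finset κ) (I₂ : Finset ι) (h : κ) :
    Set (Finset κ × Finset ι × Finset κ × Finset ι) :=
  if h ∈ H₁ then
    if h ∈ H₂ then
      {q | ∃ i : ι, par i = h ∧
        q = (H₁ ∪ holes i, insert i I₁, H₂ ∪ holes i, insert i I₂)}
    else
      {q | ∃ i : ι, par i = h ∧ q = (H₁ ∪ holes i, insert i I₁, H₂, I₂)}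
  else
    if h ∈ H₂ then
      {q | ∃ i : ι, par i = h ∧ q = (H₁, I₁, H₂ ∪ holes i, insert i I₂)}
    else {(H₁, I₁, H₂, I₂)}

/-- `expand(N, E, h)`. -/
def expand {ι κ : Type*} [DecidableEq ι] [DecidableEq κ]
    (par : ι → κ) (holes : ι → Finset κ)
    (NE : Set (Finset κ × Finset ι) × Set (Finset κ × Finset ι × Finset κ × Finset ι))
    (h : κ) :
    Set (Finset κ × Finset ι) × Set (Finset κ × Finset ι × Finset κ × Finset ι) :=
  (⋃ p ∈ NE.1, expandNode par holes p.1 p.2 h,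
   (⋃ p ∈ NE.1, newEdges par holes p.1 p.2 h) ∪
     ⋃ q ∈ NE.2, expandEdge par holes q.1 q.2.1 q.2.2.1 q.2.2.2 h)

/-- The model-graph algorithm: `(algo … j)` is the pair `(N_j, E_j)`, starting from
`(N₀, E₀) = ({(baseHoles, ∅)}, ∅)` and expanding on the hole `Hs j` at stage `j`. -/
def algo {ι κ : Type*} [DecidableEq ι] [DecidableEq κ]
    (par : ι → κ) (holes : ι → Finset κ) (baseHoles : Finset κ) (Hs : ℕ → κ) :
    ℕ → Set (Finset κ × Finset ι) × Set (Finset κ × Finset ι × Finset κ × Finset ι)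
  | 0 => ({(baseHoles, (∅ : Finset ι))}, ∅)
  | j + 1 => expand par holes (algo par holes baseHoles Hs j) (Hs (j + 1))


lemma Hpre_zero {κ : Type*} [DecidableEq κ] (Hs : ℕ → κ) : Hpre Hs 0 = ∅ := by
  simp [Hpre]

lemma Hpre_succ {κ : Type*} [DecidableEq κ] (Hs : ℕ → κ) (j : ℕ) :
    Hpre Hs (j + 1) = insert (Hs (j + 1)) (Hpre Hs j) := by
  ext x
  simp only [Hpre, Finset.mem_image, Finset.mem_insert, Finset.mem_Icc]
  constructor
  · rintro ⟨m, ⟨h1, h2⟩, rfl⟩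
    rcases eq_or_lt_of_le h2 with rfl | h
    · exact Or.inl rfl
    · exact Or.inr ⟨m, ⟨h1, by omega⟩, rfl⟩
  · rintro (rfl | ⟨m, ⟨h1, h2⟩, rfl⟩)
    · exact ⟨j + 1, ⟨by omega, le_refl _⟩, rfl⟩
    · exact ⟨m, ⟨h1, by omega⟩, rfl⟩

lemma siblings_eq_empty_iff {ι κ : Type*} [DecidableEq ι] [DecidableEq κ]
    (par : ι → κ) (I : Finset ι) :
    siblings par I I = ∅ ↔ ∀ i₁ ∈ I, ∀ i₂ ∈ I, par i₁ = par i₂ → i₁ = i₂ := by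
  simp only [siblings, Finset.filter_eq_empty_iff, Finset.mem_product]
  constructor
  · intro h i₁ h₁ i₂ h₂ hp
    by_contra hne
    exact @h (i₁, i₂) ⟨h₁, h₂⟩ ⟨hne, hp⟩
  · rintro h ⟨i₁, i₂⟩ ⟨h₁, h₂⟩
    intro ⟨hne, hp⟩
    exact hne (h i₁ h₁ i₂ h₂ hp)

lemma algo_inv {ι κ : Type*} [Fintype ι] [DecidableEq ι] [Fintype κ] [DecidableEq κ]
    (par : ι → κ) (holes : ι → Finset κ) (baseHoles : Finset κ)
    (n : ℕ) (Hs : ℕ → κ) (htopo : TopoEnum par holes n Hs) :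
    ∀ j, j ≤ n → ∀ H (I : Finset ι), (H, I) ∈ (algo par holes baseHoles Hs j).1 ↔
      (H = baseHoles ∪ holesOf holes I ∧ pars par I = H ∩ Hpre Hs j ∧
        siblings par I I = ∅) := by
  intro j
  induction j with
  | zero =>
    intro _ H I
    simp only [algo, Set.mem_singleton_iff, Prod.mk.injEq, Hpre_zero, Finset.inter_empty]
    constructor
    · rintro ⟨rfl, rfl⟩
      simp [holesOf, pars, siblings]
    · rintro ⟨hH, hp, -⟩
      have : I = ∅ := by
        by_contra hne
        obtain ⟨i, hi⟩ := Finset.nonempty_iff_ne_empty.2 hne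
        have : par i ∈ pars par I := Finset.mem_image_of_mem par hi
        simp [hp] at this
      subst this
      simp only [holesOf, Finset.biUnion_empty, Finset.union_empty] at hH
      exact ⟨hH, rfl⟩
  | succ j ih =>
    intro hjn H' I'
    have hj : j ≤ n := Nat.le_of_succ_le hjn
    set h := Hs (j + 1) with hh
    -- topological facts
    have hnotpre : h ∉ Hpre Hs j := by
      simp only [Hpre, Finset.mem_image, Finset.mem_Icc]
      rintro ⟨m, ⟨h1, h2⟩, hm⟩
      have := htopo.2.1 m (j + 1) h1 (by omega) (by omega) hjn hm
      omega
    have hdisj : ∀ i : ι, par i = h → ∀ h' ∈ holes i, h' ∉ Hpre Hs (j + 1) := by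
      intro i hpi h' hh' hmem
      simp only [Hpre, Finset.mem_image, Finset.mem_Icc] at hmem
      obtain ⟨m, ⟨h1, h2⟩, rfl⟩ := hmem
      have := htopo.2.2 (j + 1) m (by omega) hjn h1 (by omega) ⟨i, hpi, hh'⟩
      omega
    have hmempre : h ∈ Hpre Hs (j + 1) := by
      rw [Hpre_succ]; exact Finset.mem_insert_self _ _
    have hmemN : ∀ H (I : Finset ι), (H, I) ∈ (algo par holes baseHoles Hs (j + 1)).1 ↔
        ∃ H₀ I₀, (H₀, I₀) ∈ (algo par holes baseHoles Hs j).1 ∧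
          (H, I) ∈ expandNode par holes H₀ I₀ h := by
      intro H I
      simp only [algo, expand, Set.mem_iUnion]
      constructor
      · rintro ⟨p, hp, hmem⟩
        exact ⟨p.1, p.2, hp, hmem⟩
      · rintro ⟨H₀, I₀, hp, hmem⟩
        exact ⟨(H₀, I₀), hp, hmem⟩
    rw [hmemN]
    constructor
    · rintro ⟨H, I, hN, hexp⟩
      rw [ih hj] at hN
      obtain ⟨hHeq, hpars, hsib⟩ := hN
      unfold expandNode at hexp
      by_cases hhH : h ∈ H
      · rw [if_pos hhH] at hexp
        obtain ⟨i, hpi, heq⟩ := hexp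
        have hH' : H' = H ∪ holes i := (Prod.mk.injEq _ _ _ _ ▸ heq).1
        have hI' : I' = insert i I := (Prod.mk.injEq _ _ _ _ ▸ heq).2
        subst hH' hI'
        refine ⟨?_, ?_, ?_⟩
        · rw [holesOf, Finset.biUnion_insert, hHeq, holesOf,
            Finset.union_comm (holes i) (I.biUnion holes), ← Finset.union_assoc]
        · rw [pars, Finset.image_insert, ← pars, hpars, hpi, Hpre_succ]
          ext x
          simp only [Finset.mem_insert, Finset.mem_inter, Finset.mem_union]
          constructor
          · rintro (rfl | ⟨hx1, hx2⟩)
            · exact ⟨Or.inl hhH, Or.inl rfl⟩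
            · exact ⟨Or.inl hx1, Or.inr hx2⟩
          · rintro ⟨hx1, (rfl | hx2)⟩
            · exact Or.inl rfl
            · refine Or.inr ⟨?_, hx2⟩
              rcases hx1 with hx1 | hx1
              · exact hx1
              · exact absurd (by rw [Hpre_succ]; exact Finset.mem_insert_of_mem hx2)
                  (hdisj i hpi x hx1)
        · rw [siblings_eq_empty_iff] at hsib ⊢
          intro i₁ h₁ i₂ h₂ hpe
          rw [Finset.mem_insert] at h₁ h₂
          have hnot : ∀ i' ∈ I, par i' ≠ h := by
            intro i' hi' hpar
            have : par i' ∈ pars par I := Finset.mem_image_of_mem par hi'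
            rw [hpars, Finset.mem_inter] at this
            exact hnotpre (hpar ▸ this.2)
          rcases h₁ with rfl | h₁ <;> rcases h₂ with rfl | h₂
          · rfl
          · exact absurd (hpe.symm.trans hpi) (hnot i₂ h₂)
          · exact absurd (hpe.trans hpi) (hnot i₁ h₁)
          · exact hsib i₁ h₁ i₂ h₂ hpe
      · rw [if_neg hhH] at hexp
        rw [Set.mem_singleton_iff, Prod.mk.injEq] at hexp
        obtain ⟨rfl, rfl⟩ := hexp
        refine ⟨hHeq, ?_, hsib⟩
        rw [hpars, Hpre_succ]
        ext x
        simp only [Finset.mem_inter, Finset.mem_insert]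
        constructor
        · rintro ⟨hx1, hx2⟩; exact ⟨hx1, Or.inr hx2⟩
        · rintro ⟨hx1, (rfl | hx2)⟩
          · exact absurd hx1 hhH
          · exact ⟨hx1, hx2⟩
    · rintro ⟨hHeq, hpars, hsib⟩
      by_cases hhH : h ∈ H'
      · -- h was expanded; find the implementation of h in I'
        have hhp : h ∈ pars par I' := by
          rw [hpars, Finset.mem_inter]; exact ⟨hhH, hmempre⟩
        rw [pars, Finset.mem_image] at hhp
        obtain ⟨i, hiI, hpi⟩ := hhp
        have huniq : ∀ i' ∈ I', par i' = h → i' = i := by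
          intro i' hi' hp'
          exact (siblings_eq_empty_iff par I').1 hsib i' hi' i hiI (hp'.trans hpi.symm)
        set I := I'.erase i with hI
        set H := baseHoles ∪ holesOf holes I with hH
        have hIins : I' = insert i I := (Finset.insert_erase hiI).symm
        have hinotI : i ∉ I := Finset.notMem_erase i I'
        have hH'eq : H' = H ∪ holes i := by
          rw [hHeq, hIins, holesOf, Finset.biUnion_insert, hH, holesOf,
            Finset.union_comm (holes i) (I.biUnion holes), ← Finset.union_assoc]
        have hnothi : h ∉ holes i := fun hx => hdisj i hpi h hx hmempre
        have hsibI : siblings par I I = ∅ := by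
          rw [siblings_eq_empty_iff] at hsib ⊢
          intro i₁ h₁ i₂ h₂ hpe
          exact hsib i₁ (Finset.mem_of_mem_erase h₁) i₂ (Finset.mem_of_mem_erase h₂) hpe
        have hparsI : pars par I = H ∩ Hpre Hs j := by
          ext x
          simp only [pars, Finset.mem_image, Finset.mem_inter]
          constructor
          · rintro ⟨i', hi', rfl⟩
            have hine : i' ≠ i := Finset.ne_of_mem_erase hi'
            have hi'I' : i' ∈ I' := Finset.mem_of_mem_erase hi'
            have hxh : par i' ≠ h := fun hx => hine (huniq i' hi'I' hx)
            have hx' : par i' ∈ H' ∩ Hpre Hs (j + 1) := by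
              rw [← hpars]; exact Finset.mem_image_of_mem par hi'I'
            rw [Finset.mem_inter, Hpre_succ, Finset.mem_insert] at hx'
            obtain ⟨hx1, hx2⟩ := hx'
            have hx2' : par i' ∈ Hpre Hs j := hx2.resolve_left hxh
            refine ⟨?_, hx2'⟩
            rw [hH'eq, Finset.mem_union] at hx1
            rcases hx1 with hx1 | hx1
            · exact hx1
            · exact absurd (by rw [Hpre_succ]; exact Finset.mem_insert_of_mem hx2')
                (hdisj i hpi _ hx1)
          · rintro ⟨hx1, hx2⟩
            have hxH' : x ∈ H' := by rw [hH'eq, Finset.mem_union]; exact Or.inl hx1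
            have hxp : x ∈ pars par I' := by
              rw [hpars, Finset.mem_inter, Hpre_succ]
              exact ⟨hxH', Finset.mem_insert_of_mem hx2⟩
            rw [pars, Finset.mem_image] at hxp
            obtain ⟨i', hi', rfl⟩ := hxp
            have hine : i' ≠ i := by
              rintro rfl
              exact hnotpre (hpi ▸ hx2)
            exact ⟨i', Finset.mem_erase.2 ⟨hine, hi'⟩, rfl⟩
        have hhHmem : h ∈ H := by
          have : h ∈ H ∪ holes i := hH'eq ▸ hhH
          rw [Finset.mem_union] at this
          exact this.resolve_right hnothi
        refine ⟨H, I, ?_, ?_⟩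
        · rw [ih hj]; exact ⟨hH, hparsI, hsibI⟩
        · unfold expandNode
          rw [if_pos hhHmem]
          exact ⟨i, hpi, by rw [hH'eq, hIins]⟩
      · refine ⟨H', I', ?_, ?_⟩
        · rw [ih hj]
          refine ⟨hHeq, ?_, hsib⟩
          rw [hpars, Hpre_succ]
          ext x
          simp only [Finset.mem_inter, Finset.mem_insert]
          constructor
          · rintro ⟨hx1, (rfl | hx2)⟩
            · exact absurd hx1 hhH
            · exact ⟨hx1, hx2⟩
          · rintro ⟨hx1, hx2⟩; exact ⟨hx1, Or.inr hx2⟩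
        · unfold expandNode
          rw [if_neg hhH]
          rfl

/-- `N_n` is correct and complete: the final node set produced by the model-graph
algorithm is exactly the set of valid selections, i.e. the node set of the model graph. -/
theorem algo_nodes_correct {ι κ : Type*}
    [Fintype ι] [DecidableEq ι] [Fintype κ] [DecidableEq κ]
    (par : ι → κ) (holes : ι → Finset κ) (baseHoles : Finset κ)
    (hvalid : StructValid par holes baseHoles)
    (n : ℕ) (Hs : ℕ → κ) (htopo : TopoEnum par holes n Hs) :
    {I : Finset ι | ∃ H : Finset κ, (H, I) ∈ (algo par holes baseHoles Hs n).1} =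
      {I : Finset ι | ValidSelection par holes baseHoles I} := by
  have huniv : Hpre Hs n = Finset.univ := by
    ext x
    simp only [Finset.mem_univ, iff_true, Hpre, Finset.mem_image, Finset.mem_Icc]
    obtain ⟨j, h1, h2, h3⟩ := htopo.1 x
    exact ⟨j, ⟨h1, h2⟩, h3⟩
  ext I
  simp only [Set.mem_setOf_eq]
  constructor
  · rintro ⟨H, hmem⟩
    rw [algo_inv par holes baseHoles n Hs htopo n le_rfl] at hmem
    obtain ⟨hHeq, hpars, hsib⟩ := hmem
    rw [huniv, Finset.inter_univ] at hpars
    exact ⟨hpars.trans hHeq, hsib⟩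
  · rintro ⟨hpars, hsib⟩
    refine ⟨baseHoles ∪ holesOf holes I, ?_⟩
    rw [algo_inv par holes baseHoles n Hs htopo n le_rfl]
    refine ⟨rfl, ?_, hsib⟩
    rw [huniv, Finset.inter_univ]
    exact hpars
end

section
/- Suppose the modular program signature is structurally valid. For every j ∈ {0, 1, …, n} and every quadruple (H₁, I₁, H₂, I₂) ∈ E_j, |siblings(I₁, I₂)| = 1 (the two partial selections of every edge prefix produced by the algorithm differ by exactly one pair of sibling implementations). -/
section Aux

variable {ι κ : Type*} [DecidableEq ι] [DecidableEq κ]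

lemma mem_siblings (par : ι → κ) (I₁ I₂ : Finset ι) (p : ι × ι) :
    p ∈ siblings par I₁ I₂ ↔ p.1 ∈ I₁ ∧ p.2 ∈ I₂ ∧ p.1 ≠ p.2 ∧ par p.1 = par p.2 := by
  simp [siblings, Finset.mem_filter, Finset.mem_product, and_assoc]

lemma siblings_insert_left (par : ι → κ) (i : ι) (I₁ I₂ : Finset ι)
    (hp : par i ∉ pars par I₂) :
    siblings par (insert i I₁) I₂ = siblings par I₁ I₂ := by
  ext p
  simp only [mem_siblings, Finset.mem_insert]
  constructor
  · rintro ⟨(rfl | h1), h2, h3, h4⟩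
    · exact absurd (by rw [h4]; exact Finset.mem_image_of_mem par h2 : par p.1 ∈ pars par I₂) hp
    · exact ⟨h1, h2, h3, h4⟩
  · rintro ⟨h1, h2, h3, h4⟩
    exact ⟨Or.inr h1, h2, h3, h4⟩

lemma siblings_insert_right (par : ι → κ) (i : ι) (I₁ I₂ : Finset ι)
    (hp : par i ∉ pars par I₁) :
    siblings par I₁ (insert i I₂) = siblings par I₁ I₂ := by
  ext p
  simp only [mem_siblings, Finset.mem_insert]
  constructor
  · rintro ⟨h1, (rfl | h2), h3, h4⟩
    · exact absurd (by rw [← h4]; exact Finset.mem_image_of_mem par h1 : par p.2 ∈ pars par I₁) hp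
    · exact ⟨h1, h2, h3, h4⟩
  · rintro ⟨h1, h2, h3, h4⟩
    exact ⟨h1, Or.inr h2, h3, h4⟩

lemma siblings_new (par : ι → κ) (i₁ i₂ : ι) (I : Finset ι) (h : κ)
    (h1 : par i₁ = h) (h2 : par i₂ = h) (hne : i₁ ≠ i₂)
    (hfresh : h ∉ pars par I)
    (hinj : ∀ a ∈ I, ∀ b ∈ I, par a = par b → a = b) :
    siblings par (insert i₁ I) (insert i₂ I) = {(i₁, i₂)} := by
  ext p
  simp only [mem_siblings, Finset.mem_insert, Finset.mem_singleton]
  constructor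
  · rintro ⟨(ha | ha), (hb | hb), hne', hpar⟩
    · exact Prod.ext ha hb
    · exact absurd (show h ∈ pars par I by
        rw [← h1, ← ha, hpar]; exact Finset.mem_image_of_mem par hb) hfresh
    · exact absurd (show h ∈ pars par I by
        rw [← h2, ← hb, ← hpar]; exact Finset.mem_image_of_mem par ha) hfresh
    · exact absurd (hinj _ ha _ hb hpar) hne'
  · rintro rfl
    exact ⟨Or.inl rfl, Or.inl rfl, hne, h1.trans h2.symm⟩

lemma siblings_insert_both (par : ι → κ) (i : ι) (I₁ I₂ : Finset ι)
    (hp1 : par i ∉ pars par I₁) (hp2 : par i ∉ pars par I₂) :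
    siblings par (insert i I₁) (insert i I₂) = siblings par I₁ I₂ := by
  ext p
  simp only [mem_siblings, Finset.mem_insert]
  constructor
  · rintro ⟨(ha | ha), (hb | hb), hne, hpar⟩
    · exact absurd (ha.trans hb.symm) hne
    · exact absurd (show par i ∈ pars par I₂ by
        rw [← ha, hpar]; exact Finset.mem_image_of_mem par hb) hp2
    · exact absurd (show par i ∈ pars par I₁ by
        rw [← hb, ← hpar]; exact Finset.mem_image_of_mem par ha) hp1
    · exact ⟨ha, hb, hne, hpar⟩
  · rintro ⟨ha, hb, hne, hpar⟩
    exact ⟨Or.inr ha, Or.inr hb, hne, hpar⟩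

lemma pars_insert (par : ι → κ) (i : ι) (I : Finset ι) :
    pars par (insert i I) = insert (par i) (pars par I) :=
  Finset.image_insert par i I

lemma Hpre_mono (Hs : ℕ → κ) {j k : ℕ} (h : j ≤ k) : Hpre Hs j ⊆ Hpre Hs k :=
  Finset.image_subset_image (Finset.Icc_subset_Icc le_rfl h)

lemma mem_Hpre_self (Hs : ℕ → κ) (j : ℕ) (hj : 1 ≤ j) : Hs j ∈ Hpre Hs j :=
  Finset.mem_image_of_mem Hs (Finset.mem_Icc.mpr ⟨hj, le_rfl⟩)

end Aux

lemma algo_invariant {ι κ : Type*} [DecidableEq ι] [DecidableEq κ]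
    (par : ι → κ) (holes : ι → Finset κ) (baseHoles : Finset κ)
    (n : ℕ) (Hs : ℕ → κ)
    (hinjHs : ∀ j k, 1 ≤ j → j ≤ n → 1 ≤ k → k ≤ n → Hs j = Hs k → j = k) :
    ∀ j, j ≤ n →
      (∀ H I, (H, I) ∈ (algo par holes baseHoles Hs j).1 →
        (∀ a ∈ I, ∀ b ∈ I, par a = par b → a = b) ∧ pars par I ⊆ Hpre Hs j) ∧
      (∀ H₁ I₁ H₂ I₂, (H₁, I₁, H₂, I₂) ∈ (algo par holes baseHoles Hs j).2 →
        (siblings par I₁ I₂).card = 1 ∧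
          pars par I₁ ⊆ Hpre Hs j ∧ pars par I₂ ⊆ Hpre Hs j) := by
  intro j
  induction j with
  | zero =>
    intro _
    constructor
    · intro H I hHI
      simp only [algo, Set.mem_singleton_iff, Prod.mk.injEq] at hHI
      obtain ⟨rfl, rfl⟩ := hHI
      exact ⟨by simp, by simp [pars]⟩
    · intro H₁ I₁ H₂ I₂ hE
      simp [algo] at hE
  | succ j ih =>
    intro hjn
    have ihj := ih (Nat.le_of_succ_le hjn)
    have hfresh : Hs (j + 1) ∉ Hpre Hs j := by
      intro hmem
      obtain ⟨k, hk, hEq⟩ := Finset.mem_image.mp hmem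
      obtain ⟨hk1, hk2⟩ := Finset.mem_Icc.mp hk
      have := hinjHs k (j + 1) hk1 (hk2.trans (Nat.le_of_succ_le hjn)) (by omega) hjn hEq
      omega
    have hparsub : ∀ (i : ι) (I : Finset ι), par i = Hs (j + 1) →
        pars par I ⊆ Hpre Hs j → pars par (insert i I) ⊆ Hpre Hs (j + 1) := by
      intro i I hpi hsub
      rw [pars_insert]
      intro x hx
      rcases Finset.mem_insert.mp hx with rfl | hx
      · rw [hpi]; exact mem_Hpre_self Hs (j + 1) (by omega)
      · exact Hpre_mono Hs (Nat.le_succ j) (hsub hx)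
    have hmono := Hpre_mono Hs (Nat.le_succ j)
    constructor
    · intro H I hHI
      simp only [algo, expand, Set.mem_iUnion] at hHI
      obtain ⟨⟨Hp, Ip⟩, hp, hmem⟩ := hHI
      obtain ⟨hinjp, hsubp⟩ := ihj.1 Hp Ip hp
      have hfr : Hs (j + 1) ∉ pars par Ip := fun hh => hfresh (hsubp hh)
      by_cases hH : Hs (j + 1) ∈ Hp
      · rw [expandNode, if_pos hH] at hmem
        obtain ⟨i, hpi, heq⟩ := hmem
        simp only [Prod.mk.injEq] at heq
        obtain ⟨rfl, rfl⟩ := heq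
        refine ⟨?_, hparsub i Ip hpi hsubp⟩
        intro a ha b hb hab
        rcases Finset.mem_insert.mp ha with ha' | ha' <;>
          rcases Finset.mem_insert.mp hb with hb' | hb'
        · rw [ha', hb']
        · exact absurd (show Hs (j + 1) ∈ pars par Ip by
            rw [← hpi, ← ha', hab]; exact Finset.mem_image_of_mem par hb') hfr
        · exact absurd (show Hs (j + 1) ∈ pars par Ip by
            rw [← hpi, ← hb', ← hab]; exact Finset.mem_image_of_mem par ha') hfr
        · exact hinjp a ha' b hb' hab
      · rw [expandNode, if_neg hH] at hmem
        simp only [Set.mem_singleton_iff, Prod.mk.injEq] at hmem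
        obtain ⟨rfl, rfl⟩ := hmem
        exact ⟨hinjp, fun x hx => hmono (hsubp hx)⟩
    · intro H₁ I₁ H₂ I₂ hE
      simp only [algo, expand, Set.mem_union, Set.mem_iUnion] at hE
      rcases hE with ⟨⟨Hp, Ip⟩, hp, hmem⟩ | ⟨⟨Q1, Q2, Q3, Q4⟩, hq, hmem⟩
      · -- newEdges
        obtain ⟨hinjp, hsubp⟩ := ihj.1 Hp Ip hp
        have hfr : Hs (j + 1) ∉ pars par Ip := fun hh => hfresh (hsubp hh)
        by_cases hH : Hs (j + 1) ∈ Hp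
        · rw [newEdges, if_pos hH] at hmem
          obtain ⟨i₁, i₂, hpi1, hpi2, hne, heq⟩ := hmem
          simp only [Prod.mk.injEq] at heq
          obtain ⟨rfl, rfl, rfl, rfl⟩ := heq
          refine ⟨?_, hparsub i₁ Ip hpi1 hsubp, hparsub i₂ Ip hpi2 hsubp⟩
          rw [siblings_new par i₁ i₂ Ip (Hs (j + 1)) hpi1 hpi2 hne hfr hinjp]
          exact Finset.card_singleton _
        · rw [newEdges, if_neg hH] at hmem
          exact absurd hmem (Set.notMem_empty _)
      · -- expandEdge
        obtain ⟨hcard, hsub1, hsub2⟩ := ihj.2 Q1 Q2 Q3 Q4 hq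
        have hfr1 : Hs (j + 1) ∉ pars par Q2 := fun hh => hfresh (hsub1 hh)
        have hfr2 : Hs (j + 1) ∉ pars par Q4 := fun hh => hfresh (hsub2 hh)
        by_cases hH1 : Hs (j + 1) ∈ Q1 <;> by_cases hH2 : Hs (j + 1) ∈ Q3
        · rw [expandEdge, if_pos hH1, if_pos hH2] at hmem
          obtain ⟨i, hpi, heq⟩ := hmem
          simp only [Prod.mk.injEq] at heq
          obtain ⟨rfl, rfl, rfl, rfl⟩ := heq
          refine ⟨?_, hparsub i _ hpi hsub1, hparsub i _ hpi hsub2⟩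
          rwa [siblings_insert_both par i _ _ (hpi ▸ hfr1) (hpi ▸ hfr2)]
        · rw [expandEdge, if_pos hH1, if_neg hH2] at hmem
          obtain ⟨i, hpi, heq⟩ := hmem
          simp only [Prod.mk.injEq] at heq
          obtain ⟨rfl, rfl, rfl, rfl⟩ := heq
          refine ⟨?_, hparsub i _ hpi hsub1, fun x hx => hmono (hsub2 hx)⟩
          rwa [siblings_insert_left par i _ _ (hpi ▸ hfr2)]
        · rw [expandEdge, if_neg hH1, if_pos hH2] at hmem
          obtain ⟨i, hpi, heq⟩ := hmem
          simp only [Prod.mk.injEq] at heq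
          obtain ⟨rfl, rfl, rfl, rfl⟩ := heq
          refine ⟨?_, fun x hx => hmono (hsub1 hx), hparsub i _ hpi hsub2⟩
          rwa [siblings_insert_right par i _ _ (hpi ▸ hfr1)]
        · rw [expandEdge, if_neg hH1, if_neg hH2] at hmem
          simp only [Set.mem_singleton_iff, Prod.mk.injEq] at hmem
          obtain ⟨rfl, rfl, rfl, rfl⟩ := hmem
          exact ⟨hcard, fun x hx => hmono (hsub1 hx), fun x hx => hmono (hsub2 hx)⟩

/-- Edge prefix endpoints share exactly one pair of siblings: for every
`j ∈ {0, 1, …, n}` and every quadruple `(H₁, I₁, H₂, I₂) ∈ E_j`,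
`|siblings(I₁, I₂)| = 1`. -/

theorem algo_edge_one_sibling {ι κ : Type*}
    [Fintype ι] [DecidableEq ι] [Fintype κ] [DecidableEq κ]
    (par : ι → κ) (holes : ι → Finset κ) (baseHoles : Finset κ)
    (hvalid : StructValid par holes baseHoles)
    (n : ℕ) (Hs : ℕ → κ) (htopo : TopoEnum par holes n Hs)
    (j : ℕ) (hjn : j ≤ n)
    (H₁ : Finset κ) (I₁ : Finset ι) (H₂ : Finset κ) (I₂ : Finset ι)
    (hmem : (H₁, I₁, H₂, I₂) ∈ (algo par holes baseHoles Hs j).2) :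
    (siblings par I₁ I₂).card = 1 := by
  exact ((algo_invariant par holes baseHoles n Hs htopo.2.1 j hjn).2 H₁ I₁ H₂ I₂ hmem).1
end
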